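/- arXiv:cs/0306106 — 2 statements merged into one kernel-verified Lean document; each statement's English description precedes it below -/
import Mathlib

section
/- In a countably additive Popper space, for any conditioning event V₀, the infimum over V' in the ∼-equivalence class of V₀ of μ(V₀ | V₀ ∪ V') is strictly positive. -/
/-- A countably additive Popper space over `(W, F)`: `F` is a σ-algebra of subsets of `W`,
`F'` ⊆ `F` does not contain `∅`, is closed under supersets in `F`, satisfies the regularity
condition that `μ(V | U) ≠ 0` with `U ∈ F'` implies `V ∩ U ∈ F'`, and `μ` satisfies CP1–CP3
and is countably additive in its first argument. -/
structure Popper {W : Type*} (F F' : Set (Set W)) (μ : Set W → Set W → ℝ) : Prop where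
  univ_mem : Set.univ ∈ F
  compl_mem : ∀ ⦃U⦄, U ∈ F → Uᶜ ∈ F
  iUnion_mem : ∀ s : ℕ → Set W, (∀ n, s n ∈ F) → (⋃ n, s n) ∈ F
  subset : F' ⊆ F
  empty_not_mem : (∅ : Set W) ∉ F'
  superset_closed : ∀ ⦃U V⦄, U ∈ F' → U ⊆ V → V ∈ F → V ∈ F'
  cond_closed : ∀ ⦃U V⦄, U ∈ F' → V ∈ F → μ V U ≠ 0 → V ∩ U ∈ F'
  nonneg : ∀ V ∈ F, ∀ U ∈ F', 0 ≤ μ V U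
  le_one : ∀ V ∈ F, ∀ U ∈ F', μ V U ≤ 1
  cp1 : ∀ U ∈ F', μ U U = 1
  cp2 : ∀ V₁ ∈ F, ∀ V₂ ∈ F, ∀ U ∈ F', Disjoint V₁ V₂ → μ (V₁ ∪ V₂) U = μ V₁ U + μ V₂ U
  cp3 : ∀ V ∈ F, ∀ X ∈ F', ∀ U ∈ F', V ⊆ X → X ⊆ U → μ V U = μ V X * μ X U
  countably_additive : ∀ V : ℕ → Set W, (∀ n, V n ∈ F) → Pairwise (Function.onFun Disjoint V) →
    ∀ U ∈ F', HasSum (fun n => μ (V n) U) (μ (⋃ n, V n) U)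

/-- The relation `U ≤ V` defined by `μ(U | U ∪ V) > 0`. -/
def leRel {W : Type*} (μ : Set W → Set W → ℝ) (U V : Set W) : Prop :=
  0 < μ U (U ∪ V)

/-- `U ∼ V` iff `U ≤ V` and `V ≤ U`. -/
def simRel {W : Type*} (μ : Set W → Set W → ℝ) (U V : Set W) : Prop :=
  leRel μ U V ∧ leRel μ V U


/-! Take `Vₙ ∼ V₀` with `μ(V₀ | V₀ ∪ Vₙ)` tending to the infimum and put `U = ⋃ₙ (V₀ ∪ Vₙ)`.
By CP3, `μ(V₀ | U) ≤ μ(V₀ | V₀ ∪ Vₙ)` for every `n`, so the infimum is at least `μ(V₀ | U)`.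
This is positive: if it vanished, then, as `μ(V₀ | V₀ ∪ Vₙ) > 0`, CP3 would force
`μ(V₀ ∪ Vₙ | U) = 0` for every `n`, and countable additivity would give `μ(U | U) = 0`,
contradicting CP1. -/

namespace Popper

variable {W : Type*} {F F' : Set (Set W)} {μ : Set W → Set W → ℝ}

/-- The σ-algebra `F`, as a `MeasurableSpace`, to borrow Mathlib's closure lemmas. -/
abbrev measurableSpace (h : Popper F F' μ) : MeasurableSpace W where
  MeasurableSet' := (· ∈ F)
  measurableSet_empty := by simpa using h.compl_mem h.univ_mem
  measurableSet_compl := h.compl_mem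
  measurableSet_iUnion := h.iUnion_mem

lemma union_mem (h : Popper F F' μ) {A B : Set W} (hA : A ∈ F) (hB : B ∈ F) : A ∪ B ∈ F :=
  @MeasurableSet.union W h.measurableSpace A B hA hB

lemma diff_mem (h : Popper F F' μ) {A B : Set W} (hA : A ∈ F) (hB : B ∈ F) : A \ B ∈ F :=
  @MeasurableSet.diff W h.measurableSpace A B hA hB

lemma disjointed_mem (h : Popper F F' μ) {t : ℕ → Set W} (ht : ∀ n, t n ∈ F) (n : ℕ) :
    disjointed t n ∈ F :=
  @MeasurableSet.disjointed W h.measurableSpace t ht n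

lemma union_mem_of_left (h : Popper F F' μ) {U V : Set W} (hU : U ∈ F') (hV : V ∈ F) :
    U ∪ V ∈ F' :=
  h.superset_closed hU Set.subset_union_left (h.union_mem (h.subset hU) hV)

lemma iUnion_union_mem (h : Popper F F' μ) {V₀ : Set W} (hV₀ : V₀ ∈ F') {V : ℕ → Set W}
    (hV : ∀ n, V n ∈ F) : ⋃ n, V₀ ∪ V n ∈ F' :=
  h.superset_closed (h.union_mem_of_left hV₀ (hV 0)) (Set.subset_iUnion (fun n => V₀ ∪ V n) 0)
    (h.iUnion_mem _ fun n => h.union_mem (h.subset hV₀) (hV n))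

lemma cond_mono (h : Popper F F' μ) {A B U : Set W} (hA : A ∈ F) (hB : B ∈ F) (hU : U ∈ F')
    (hAB : A ⊆ B) : μ A U ≤ μ B U := by
  have hsplit := h.cp2 A hA (B \ A) (h.diff_mem hB hA) U hU Set.disjoint_sdiff_right
  rw [Set.union_sdiff_cancel hAB] at hsplit
  linarith [h.nonneg _ (h.diff_mem hB hA) U hU]

lemma cond_le_cond_of_subset (h : Popper F F' μ) {V X U : Set W} (hV : V ∈ F) (hX : X ∈ F')
    (hU : U ∈ F') (hVX : V ⊆ X) (hXU : X ⊆ U) : μ V U ≤ μ V X := by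
  rw [h.cp3 V hV X hX U hU hVX hXU]
  exact mul_le_of_le_one_right (h.nonneg V hV X hX) (h.le_one X (h.subset hX) U hU)

lemma cond_iUnion_eq_zero (h : Popper F F' μ) {t : ℕ → Set W} (ht : ∀ n, t n ∈ F) {U : Set W}
    (hU : U ∈ F') (hzero : ∀ n, μ (t n) U = 0) : μ (⋃ n, t n) U = 0 := by
  have hdisj_zero : ∀ n, μ (disjointed t n) U = 0 := fun n =>
    le_antisymm
      ((h.cond_mono (h.disjointed_mem ht n) (ht n) hU (disjointed_subset t n)).trans_eq
        (hzero n))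
      (h.nonneg _ (h.disjointed_mem ht n) U hU)
  have hsum := h.countably_additive _ (h.disjointed_mem ht) (disjoint_disjointed t) U hU
  rw [iUnion_disjointed] at hsum
  simp only [hdisj_zero] at hsum
  exact (hasSum_zero.unique hsum).symm

lemma cond_iUnion_union_pos (h : Popper F F' μ) {V₀ : Set W} (hV₀ : V₀ ∈ F') {V : ℕ → Set W}
    (hV : ∀ n, V n ∈ F) (hle : ∀ n, leRel μ V₀ (V n)) : 0 < μ V₀ (⋃ n, V₀ ∪ V n) := by
  set U := ⋃ n, V₀ ∪ V n
  have hX : ∀ n, V₀ ∪ V n ∈ F' := fun n => h.union_mem_of_left hV₀ (hV n)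
  have hU : U ∈ F' := h.iUnion_union_mem hV₀ hV
  refine (h.nonneg V₀ (h.subset hV₀) U hU).lt_of_ne fun hzero => ?_
  have hXzero : ∀ n, μ (V₀ ∪ V n) U = 0 := fun n => by
    have h3 := h.cp3 V₀ (h.subset hV₀) _ (hX n) U hU Set.subset_union_left
      (Set.subset_iUnion (fun n => V₀ ∪ V n) n)
    rw [← hzero] at h3
    exact (mul_eq_zero.1 h3.symm).resolve_left (hle n).ne'
  have := h.cond_iUnion_eq_zero (fun n => h.subset (hX n)) hU hXzero
  rw [h.cp1 U hU] at this
  exact one_ne_zero this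

end Popper

/-- In a countably additive Popper space, for any conditioning event `V₀`, the infimum over
`V'` in the `∼`-equivalence class of `V₀` of `μ(V₀ | V₀ ∪ V')` is strictly positive. -/
theorem stmt4 {W : Type*} {F F' : Set (Set W)} {μ : Set W → Set W → ℝ}
    (h : Popper F F' μ) (V₀ : Set W) (hV₀ : V₀ ∈ F') :
    0 < sInf {x : ℝ | ∃ V' ∈ F', simRel μ V' V₀ ∧ x = μ V₀ (V₀ ∪ V')} := by
  set S := {x : ℝ | ∃ V' ∈ F', simRel μ V' V₀ ∧ x = μ V₀ (V₀ ∪ V')}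
  have hself : leRel μ V₀ V₀ := by simp [leRel, h.cp1 V₀ hV₀]
  have hne : S.Nonempty := ⟨_, V₀, hV₀, ⟨hself, hself⟩, rfl⟩
  have hbdd : BddBelow S := ⟨0, by
    rintro x ⟨V', hV', -, rfl⟩
    exact h.nonneg V₀ (h.subset hV₀) _ (h.union_mem_of_left hV₀ (h.subset hV'))⟩
  obtain ⟨u, -, hu, huS⟩ := exists_seq_tendsto_sInf hne hbdd
  choose V hV hsim hVu using huS
  have hpos := h.cond_iUnion_union_pos hV₀ (fun n => h.subset (hV n)) fun n => (hsim n).2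
  refine hpos.trans_le (ge_of_tendsto' hu fun n => ?_)
  rw [hVu n]
  exact h.cond_le_cond_of_subset (h.subset hV₀) (h.union_mem_of_left hV₀ (h.subset (hV n)))
    (h.iUnion_union_mem hV₀ fun n => h.subset (hV n))
    Set.subset_union_left (Set.subset_iUnion (fun n => V₀ ∪ V n) n)
end

section
/- If ν₁ and ν₂ are nonstandard probability measures over the same measurable space and ν₁ ≈ ν₂ (they induce the same expected-value comparisons on all random variables), then ν₁ ≃ ν₂: they have the same null sets, and st(ν₁(V | U)) = st(ν₂(V | U)) for all measurable V and all U with ν₁(U) ≠ 0. -/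
/-
Testing the comparison of expectations on the two-valued variables `a · 1_A` and `b · 1_B`
shows that `ι₁ a * ν₁ A ≤ ι₁ b * ν₁ B ↔ ι₂ a * ν₂ A ≤ ι₂ b * ν₂ B` for all events `A`, `B` and
reals `a`, `b`. With `a = 1, b = 0` this says the null sets agree; with `A = V ∩ U`, `B = U`,
`a = 1` it says that `ν₁(V | U) ≤ c` and `ν₂(V | U) ≤ c` hold for the same real `c`, and the
standard part is determined by that set of `c`.
-/

/-- The standard part of an element of an ordered field extension of `ℝ`. -/
noncomputable def stPart {K : Type*} [Field K] [LinearOrder K] [IsStrictOrderedRing K] (ι : ℝ →+* K) (b : K) : ℝ :=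
  sInf {a : ℝ | b ≤ ι a}

section

variable {W : Type*}

theorem Set.indicator_const_preimage_singleton_mem {F : Set (Set W)} (huniv : Set.univ ∈ F)
    (hcompl : ∀ U ∈ F, Uᶜ ∈ F) {A : Set W} (hA : A ∈ F) (a x : ℝ) :
    (A.indicator fun _ => a) ⁻¹' {x} ∈ F := by
  have hempty : (∅ : Set W) ∈ F := by simpa using hcompl _ huniv
  obtain h | h | h | h := Set.indicator_const_preimage A {x} a <;> rw [h]
  exacts [huniv, hA, hcompl A hA, hempty]

theorem apply_empty_eq_zero_of_additive {M : Type*} [AddLeftCancelMonoid M] {F : Set (Set W)}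
    {ν : Set W → M} (hempty : ∅ ∈ F)
    (hadd : ∀ U ∈ F, ∀ V ∈ F, Disjoint U V → ν (U ∪ V) = ν U + ν V) : ν ∅ = 0 := by
  have h := hadd ∅ hempty ∅ hempty (Set.disjoint_empty _)
  rwa [Set.empty_union, left_eq_add] at h

theorem sum_mul_indicator_const_preimage {K : Type*} [NonAssocSemiring K] (ι : ℝ →+* K)
    {ν : Set W → K} (hν : ν ∅ = 0) (A : Set W) {a : ℝ} {s : Finset ℝ} (ha : a ∈ s) :
    ∑ x ∈ s, ι x * ν ((A.indicator fun _ => a) ⁻¹' {x}) = ι a * ν A := by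
  classical
  have hterm : ∀ x, ι x * ν ((A.indicator fun _ => a) ⁻¹' {x}) =
      if a = x then ι a * ν A else 0 := by
    intro x
    by_cases hx : x = 0
    · subst hx
      rcases eq_or_ne a 0 with rfl | ha0 <;> simp [*]
    · rw [Set.indicator_const_preimage_eq_union]
      split_ifs <;> simp_all
  rw [Finset.sum_congr rfl fun x _ => hterm x, Finset.sum_ite_eq, if_pos ha]

/-- The relation `ν₁ ≈ ν₂`, tested on random variables with finite range. -/
def ExpectationEquiv (F : Set (Set W)) {K₁ K₂ : Type*} [Semiring K₁] [Preorder K₁]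
    [Semiring K₂] [Preorder K₂] (ι₁ : ℝ →+* K₁) (ν₁ : Set W → K₁) (ι₂ : ℝ →+* K₂)
    (ν₂ : Set W → K₂) : Prop :=
  ∀ X Y : W → ℝ, (∀ x, X ⁻¹' {x} ∈ F) → (∀ x, Y ⁻¹' {x} ∈ F) →
    ∀ s : Finset ℝ, Set.range X ⊆ ↑s → Set.range Y ⊆ ↑s →
      ((∑ x ∈ s, ι₁ x * ν₁ (X ⁻¹' {x})) ≤ (∑ x ∈ s, ι₁ x * ν₁ (Y ⁻¹' {x})) ↔
       (∑ x ∈ s, ι₂ x * ν₂ (X ⁻¹' {x})) ≤ (∑ x ∈ s, ι₂ x * ν₂ (Y ⁻¹' {x})))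

namespace ExpectationEquiv

section Semiring

variable {F : Set (Set W)} {K₁ K₂ : Type*} [Semiring K₁] [PartialOrder K₁]
  [Semiring K₂] [PartialOrder K₂] {ι₁ : ℝ →+* K₁} {ι₂ : ℝ →+* K₂}
  {ν₁ : Set W → K₁} {ν₂ : Set W → K₂}

theorem mul_le_mul_iff (h : ExpectationEquiv F ι₁ ν₁ ι₂ ν₂) (huniv : Set.univ ∈ F)
    (hcompl : ∀ U ∈ F, Uᶜ ∈ F) (hν₁ : ν₁ ∅ = 0) (hν₂ : ν₂ ∅ = 0) {A B : Set W} (hA : A ∈ F)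
    (hB : B ∈ F) (a b : ℝ) :
    ι₁ a * ν₁ A ≤ ι₁ b * ν₁ B ↔ ι₂ a * ν₂ A ≤ ι₂ b * ν₂ B := by
  classical
  have hrange : ∀ (C : Set W) (c : ℝ), c ∈ ({0, a, b} : Finset ℝ) →
      Set.range (C.indicator fun _ => c) ⊆ ↑({0, a, b} : Finset ℝ) := by
    intro C c hc x hx
    rcases Set.mem_range_indicator.mp hx with ⟨rfl, _⟩ | ⟨_, _, rfl⟩ <;> simp_all
  have ha : a ∈ ({0, a, b} : Finset ℝ) := by simp
  have hb : b ∈ ({0, a, b} : Finset ℝ) := by simp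
  have := h _ _ (Set.indicator_const_preimage_singleton_mem huniv hcompl hA a)
    (Set.indicator_const_preimage_singleton_mem huniv hcompl hB b) _ (hrange A a ha)
    (hrange B b hb)
  simpa only [sum_mul_indicator_const_preimage _ hν₁ _ ha,
    sum_mul_indicator_const_preimage _ hν₁ _ hb, sum_mul_indicator_const_preimage _ hν₂ _ ha,
    sum_mul_indicator_const_preimage _ hν₂ _ hb] using this

theorem eq_zero_iff (h : ExpectationEquiv F ι₁ ν₁ ι₂ ν₂) (huniv : Set.univ ∈ F)
    (hcompl : ∀ U ∈ F, Uᶜ ∈ F) (hν₁ : ν₁ ∅ = 0) (hν₂ : ν₂ ∅ = 0) {U : Set W} (hU : U ∈ F)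
    (hU₁ : 0 ≤ ν₁ U) (hU₂ : 0 ≤ ν₂ U) : ν₁ U = 0 ↔ ν₂ U = 0 := by
  have hle := h.mul_le_mul_iff huniv hcompl hν₁ hν₂ hU hU 1 0
  simp only [map_one, one_mul, map_zero, zero_mul] at hle
  exact ⟨fun h₁ => le_antisymm (hle.mp h₁.le) hU₂, fun h₂ => le_antisymm (hle.mpr h₂.le) hU₁⟩

end Semiring

variable {F : Set (Set W)} {K₁ K₂ : Type*} [Field K₁] [LinearOrder K₁] [IsStrictOrderedRing K₁]
  [Field K₂] [LinearOrder K₂] [IsStrictOrderedRing K₂] {ι₁ : ℝ →+* K₁} {ι₂ : ℝ →+* K₂}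
  {ν₁ : Set W → K₁} {ν₂ : Set W → K₂}

theorem stPart_div_eq (h : ExpectationEquiv F ι₁ ν₁ ι₂ ν₂) (huniv : Set.univ ∈ F)
    (hcompl : ∀ U ∈ F, Uᶜ ∈ F) (hν₁ : ν₁ ∅ = 0) (hν₂ : ν₂ ∅ = 0) {U V : Set W} (hU : U ∈ F)
    (hV : V ∈ F) (hU₁ : 0 < ν₁ U) (hU₂ : 0 < ν₂ U) :
    stPart ι₁ (ν₁ V / ν₁ U) = stPart ι₂ (ν₂ V / ν₂ U) := by
  unfold stPart
  congr 1
  ext c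
  simpa only [Set.mem_ofPred_eq, div_le_iff₀ hU₁, div_le_iff₀ hU₂, map_one, one_mul] using
    h.mul_le_mul_iff huniv hcompl hν₁ hν₂ hV hU 1 c

end ExpectationEquiv

end

theorem stmt16_general {W : Type*} {F : Set (Set W)}
    {K₁ K₂ : Type*} [Field K₁] [LinearOrder K₁] [IsStrictOrderedRing K₁]
    [Field K₂] [LinearOrder K₂] [IsStrictOrderedRing K₂]
    (ι₁ : ℝ →+* K₁)
    (ι₂ : ℝ →+* K₂)
    (huniv : Set.univ ∈ F) (hcompl : ∀ U ∈ F, Uᶜ ∈ F)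
    (hinter : ∀ U ∈ F, ∀ V ∈ F, U ∩ V ∈ F)
    (ν₁ : Set W → K₁) (ν₂ : Set W → K₂)
    (hν₁nn : ∀ U ∈ F, 0 ≤ ν₁ U)
    (hν₁add : ∀ U ∈ F, ∀ V ∈ F, Disjoint U V → ν₁ (U ∪ V) = ν₁ U + ν₁ V)
    (hν₂nn : ∀ U ∈ F, 0 ≤ ν₂ U)
    (hν₂add : ∀ U ∈ F, ∀ V ∈ F, Disjoint U V → ν₂ (U ∪ V) = ν₂ U + ν₂ V)
    (hequiv : ∀ X Y : W → ℝ, (∀ x, X ⁻¹' {x} ∈ F) → (∀ x, Y ⁻¹' {x} ∈ F) →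
      ∀ s : Finset ℝ, Set.range X ⊆ ↑s → Set.range Y ⊆ ↑s →
        ((∑ x ∈ s, ι₁ x * ν₁ (X ⁻¹' {x})) ≤ (∑ x ∈ s, ι₁ x * ν₁ (Y ⁻¹' {x})) ↔
         (∑ x ∈ s, ι₂ x * ν₂ (X ⁻¹' {x})) ≤ (∑ x ∈ s, ι₂ x * ν₂ (Y ⁻¹' {x})))) :
    (∀ U ∈ F, ν₁ U = 0 ↔ ν₂ U = 0) ∧
    (∀ U ∈ F, ∀ V ∈ F, ν₁ U ≠ 0 →
      stPart ι₁ (ν₁ (V ∩ U) / ν₁ U) = stPart ι₂ (ν₂ (V ∩ U) / ν₂ U)) := by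
  have h : ExpectationEquiv F ι₁ ν₁ ι₂ ν₂ := hequiv
  have hempty : (∅ : Set W) ∈ F := by simpa using hcompl _ huniv
  have hν₁ := apply_empty_eq_zero_of_additive hempty hν₁add
  have hν₂ := apply_empty_eq_zero_of_additive hempty hν₂add
  have hnull : ∀ U ∈ F, ν₁ U = 0 ↔ ν₂ U = 0 := fun U hU =>
    h.eq_zero_iff huniv hcompl hν₁ hν₂ hU (hν₁nn U hU) (hν₂nn U hU)
  refine ⟨hnull, fun U hU V hV hU₁ => ?_⟩
  have hU₂ : ν₂ U ≠ 0 := (hnull U hU).not.mp hU₁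
  exact h.stPart_div_eq huniv hcompl hν₁ hν₂ hU (hinter V hV U hU)
    ((hν₁nn U hU).lt_of_ne' hU₁) ((hν₂nn U hU).lt_of_ne' hU₂)

/-- If `ν₁` and `ν₂` are nonstandard probability measures over the same measurable space and
`ν₁ ≈ ν₂` (they induce the same expected-value comparisons on all random variables), then
`ν₁ ≃ ν₂`: they have the same null sets, and `st(ν₁(V | U)) = st(ν₂(V | U))` for all
measurable `V` and all `U` with `ν₁(U) ≠ 0`. -/
theorem stmt16 {W : Type*} {F : Set (Set W)}
    {K₁ K₂ : Type*} [Field K₁] [LinearOrder K₁] [IsStrictOrderedRing K₁]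
    [Field K₂] [LinearOrder K₂] [IsStrictOrderedRing K₂]
    (ι₁ : ℝ →+* K₁) (hι₁ : Monotone ι₁)
    (hna₁ : ∃ η : K₁, 0 < η ∧ ∀ r : ℝ, 0 < r → η < ι₁ r)
    (ι₂ : ℝ →+* K₂) (hι₂ : Monotone ι₂)
    (hna₂ : ∃ η : K₂, 0 < η ∧ ∀ r : ℝ, 0 < r → η < ι₂ r)
    (huniv : Set.univ ∈ F) (hcompl : ∀ U ∈ F, Uᶜ ∈ F)
    (hunion : ∀ U ∈ F, ∀ V ∈ F, U ∪ V ∈ F) (hinter : ∀ U ∈ F, ∀ V ∈ F, U ∩ V ∈ F)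
    (ν₁ : Set W → K₁) (ν₂ : Set W → K₂)
    (hν₁nn : ∀ U ∈ F, 0 ≤ ν₁ U) (hν₁tot : ν₁ Set.univ = 1)
    (hν₁add : ∀ U ∈ F, ∀ V ∈ F, Disjoint U V → ν₁ (U ∪ V) = ν₁ U + ν₁ V)
    (hν₂nn : ∀ U ∈ F, 0 ≤ ν₂ U) (hν₂tot : ν₂ Set.univ = 1)
    (hν₂add : ∀ U ∈ F, ∀ V ∈ F, Disjoint U V → ν₂ (U ∪ V) = ν₂ U + ν₂ V)
    (hequiv : ∀ X Y : W → ℝ, (∀ x, X ⁻¹' {x} ∈ F) → (∀ x, Y ⁻¹' {x} ∈ F) →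
      ∀ s : Finset ℝ, Set.range X ⊆ ↑s → Set.range Y ⊆ ↑s →
        ((∑ x ∈ s, ι₁ x * ν₁ (X ⁻¹' {x})) ≤ (∑ x ∈ s, ι₁ x * ν₁ (Y ⁻¹' {x})) ↔
         (∑ x ∈ s, ι₂ x * ν₂ (X ⁻¹' {x})) ≤ (∑ x ∈ s, ι₂ x * ν₂ (Y ⁻¹' {x})))) :
    (∀ U ∈ F, ν₁ U = 0 ↔ ν₂ U = 0) ∧
    (∀ U ∈ F, ∀ V ∈ F, ν₁ U ≠ 0 →
      stPart ι₁ (ν₁ (V ∩ U) / ν₁ U) = stPart ι₂ (ν₂ (V ∩ U) / ν₂ U)) :=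
  stmt16_general ι₁ ι₂ huniv hcompl hinter ν₁ ν₂ hν₁nn hν₁add hν₂nn hν₂add hequiv
end
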